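/- Let G be a finite simple graph, d ≥ 1 an integer, and X a set of at least 2d+1 pairwise nonadjacent vertices of G all having the same neighborhood T, where |T| ≥ d+1. Then X ∪ T is monochromatic. -/

import Mathlib

/-!
Every vertex of `T` is adjacent to all of `X`. If `T` met both sides of a `d`-cut, a vertex of `T`
on each side would see at most `d` vertices of `X` on the other side, so `|X| ≤ 2d`. Hence `T`
lies on one side, and then every `x ∈ X`, having its `≥ d + 1` neighbours there, lies there too.
-/

variable {V : Type*}

/-- A `d`-cut of a simple graph `G`: a partition `(A, B)` of the vertex set into two
nonempty parts such that every vertex of `A` has at most `d` neighbors in `B` and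
every vertex of `B` has at most `d` neighbors in `A`. -/
def IsDCut (G : SimpleGraph V) (d : ℕ) (A B : Set V) : Prop :=
  A.Nonempty ∧ B.Nonempty ∧ Disjoint A B ∧ A ∪ B = Set.univ ∧
    (∀ v ∈ A, (G.neighborSet v ∩ B).ncard ≤ d) ∧
    (∀ v ∈ B, (G.neighborSet v ∩ A).ncard ≤ d)

/-- A vertex set `T` is monochromatic if every `d`-cut of `G` has `T` entirely on one side. -/
def Monochromatic (G : SimpleGraph V) (d : ℕ) (T : Set V) : Prop :=
  ∀ A B : Set V, IsDCut G d A B → T ⊆ A ∨ T ⊆ B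

/-- The edge cut of a cut `(A, B)`: the set of edges of `G` with one endpoint in `A`
and the other endpoint in `B`. -/
def edgeCut (G : SimpleGraph V) (A B : Set V) : Set (Sym2 V) :=
  {e | e ∈ G.edgeSet ∧ ∃ u v, e = s(u, v) ∧ u ∈ A ∧ v ∈ B}

/-- A minimal `d`-cut: no `d`-cut has an edge cut that is a proper subset of its edge cut. -/
def IsMinimalDCut (G : SimpleGraph V) (d : ℕ) (A B : Set V) : Prop :=
  IsDCut G d A B ∧ ∀ A' B' : Set V, IsDCut G d A' B' → ¬ edgeCut G A' B' ⊂ edgeCut G A B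

/-- A maximal `d`-cut: no `d`-cut has an edge cut that properly contains its edge cut. -/
def IsMaximalDCut (G : SimpleGraph V) (d : ℕ) (A B : Set V) : Prop :=
  IsDCut G d A B ∧ ∀ A' B' : Set V, IsDCut G d A' B' → ¬ edgeCut G A B ⊂ edgeCut G A' B'

namespace IsDCut

variable {G : SimpleGraph V} {d : ℕ} {A B S : Set V}

theorem symm (h : IsDCut G d A B) : IsDCut G d B A :=
  let ⟨hA, hB, hdisj, hunion, hAB, hBA⟩ := h
  ⟨hB, hA, hdisj.symm, Set.union_comm A B ▸ hunion, hBA, hAB⟩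

theorem mem_or_mem (h : IsDCut G d A B) (v : V) : v ∈ A ∨ v ∈ B := by
  rw [← Set.mem_union, h.2.2.2.1]
  exact Set.mem_univ v

theorem mem_left_of_lt_ncard (h : IsDCut G d A B) {v : V}
    (hv : d < (G.neighborSet v ∩ A).ncard) : v ∈ A :=
  (h.mem_or_mem v).resolve_right fun hvB => (h.2.2.2.2.2 v hvB).not_gt hv

theorem ncard_inter_left_le [Finite V] (h : IsDCut G d A B) {v : V} (hv : v ∈ B)
    (hS : S ⊆ G.neighborSet v) : (S ∩ A).ncard ≤ d :=
  (Set.ncard_le_ncard (Set.inter_subset_inter_left A hS) (Set.toFinite _)).trans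
    (h.2.2.2.2.2 v hv)

theorem ncard_le_of_subset_neighborSet [Finite V] (h : IsDCut G d A B) {u w : V}
    (hu : u ∈ A) (hw : w ∈ B) (hSu : S ⊆ G.neighborSet u) (hSw : S ⊆ G.neighborSet w) :
    S.ncard ≤ 2 * d := by
  have hsplit : S ∩ A ∪ S ∩ B = S := by
    rw [← Set.inter_union_distrib_left, h.2.2.2.1, Set.inter_univ]
  calc S.ncard = (S ∩ A ∪ S ∩ B).ncard := by rw [hsplit]
    _ ≤ (S ∩ A).ncard + (S ∩ B).ncard := Set.ncard_union_le _ _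
    _ ≤ d + d := add_le_add (h.ncard_inter_left_le hw hSw) (h.symm.ncard_inter_left_le hu hSu)
    _ = 2 * d := (two_mul d).symm

theorem subset_or_subset_of_common_neighbors [Finite V] (h : IsDCut G d A B) {T : Set V}
    (hS : 2 * d + 1 ≤ S.ncard) (hST : ∀ t ∈ T, S ⊆ G.neighborSet t) : T ⊆ A ∨ T ⊆ B := by
  by_contra! hT
  obtain ⟨⟨u, huT, huA⟩, ⟨w, hwT, hwB⟩⟩ := And.imp Set.not_subset.mp Set.not_subset.mp hT
  have := h.ncard_le_of_subset_neighborSet ((h.mem_or_mem w).resolve_right hwB)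
    ((h.mem_or_mem u).resolve_left huA) (hST w hwT) (hST u huT)
  omega

end IsDCut

theorem independent_twins_monochromatic_general [Fintype V] (G : SimpleGraph V) (d : ℕ)
    (X T : Set V)
    (hnbhd : ∀ x ∈ X, G.neighborSet x = T)
    (hXsize : 2 * d + 1 ≤ X.ncard) (hTsize : d + 1 ≤ T.ncard) :
    Monochromatic G d (X ∪ T) := by
  have hcommon : ∀ t ∈ T, X ⊆ G.neighborSet t := fun t ht x hx =>
    G.adj_symm (show t ∈ G.neighborSet x from hnbhd x hx ▸ ht)
  have hside : ∀ {A B : Set V}, IsDCut G d A B → T ⊆ A → X ∪ T ⊆ A := fun hcut hTA =>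
    Set.union_subset (fun x hx => hcut.mem_left_of_lt_ncard <| by
      rwa [hnbhd x hx, Set.inter_eq_left.mpr hTA]) hTA
  intro A B hcut
  rcases hcut.subset_or_subset_of_common_neighbors hXsize hcommon with hTA | hTB
  · exact Or.inl (hside hcut hTA)
  · exact Or.inr (hside hcut.symm hTB)

/-- If `X` is a set of at least `2d+1` pairwise nonadjacent vertices all having the same
neighborhood `T` with `|T| ≥ d+1`, then `X ∪ T` is monochromatic. -/
theorem independent_twins_monochromatic [Fintype V] (G : SimpleGraph V) (d : ℕ)
    (hd : 1 ≤ d) (X T : Set V)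
    (hindep : X.Pairwise fun x y => ¬ G.Adj x y)
    (hnbhd : ∀ x ∈ X, G.neighborSet x = T)
    (hXsize : 2 * d + 1 ≤ X.ncard) (hTsize : d + 1 ≤ T.ncard) :
    Monochromatic G d (X ∪ T) :=
  independent_twins_monochromatic_general G d X T hnbhd hXsize hTsize
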